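/- Let α₁, α₂, α₃ be 1-forms and σ₁, σ₂, σ₃ closed 2-forms on a manifold P with dαᵢ = σᵢ, and set ρ = e^{2t} on ℝ × P. Define ωᵢ = 2ρ dt ∧ αᵢ + 4ρ² αⱼ ∧ α_k + ρ σᵢ for (i,j,k) cyclic. Then each dωᵢ lies in the ideal generated by ω₁, ω₂, ω₃, i.e., dωᵢ is a linear combination over Ω¹ of ω₁, ω₂, ω₃. -/
import Mathlib


theorem key18 (Ω : Type*) [Ring Ω] (d : Ω →+ Ω) (ε : Ω ≃+* Ω)
    (hL : ∀ x y : Ω, d (x * y) = d x * y + ε x * d y)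
    (dt ρ a b c s1 s2 s3 : Ω)
    (hddt : d dt = 0) (hdρ : d ρ = 2 * (ρ * dt))
    (hda : d a = s1) (hdb : d b = s2) (hdc : d c = s3)
    (hds1 : d s1 = 0) (hds2 : d s2 = 0) (hds3 : d s3 = 0)
    (hεdt : ε dt = -dt) (hεa : ε a = -a) (hεb : ε b = -b) (hεc : ε c = -c)
    (hερ : ε ρ = ρ)
    (hρc : ∀ x : Ω, ρ * x = x * ρ)
    (hs1c : ∀ x : Ω, s1 * x = x * s1) (hs2c : ∀ x : Ω, s2 * x = x * s2)
    (hs3c : ∀ x : Ω, s3 * x = x * s3)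
    (hdta : dt * a = -(a * dt)) (hdtb : dt * b = -(b * dt)) (hdtc : dt * c = -(c * dt))
    (hba : b * a = -(a * b)) (hca : c * a = -(a * c)) (hcb : c * b = -(b * c))
    (hdt2 : dt * dt = 0) (ha2 : a * a = 0) (hb2 : b * b = 0) (hc2 : c * c = 0) :
    d (2 * (ρ * (dt * a)) + 4 * (ρ * ρ * (b * c)) + ρ * s1)
      = 4 * (ρ * c) * (2 * (ρ * (dt * b)) + 4 * (ρ * ρ * (c * a)) + ρ * s2)
        - 4 * (ρ * b) * (2 * (ρ * (dt * c)) + 4 * (ρ * ρ * (a * b)) + ρ * s3) := by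
  have hd1 : d (1 : Ω) = 0 := by
    have h := hL 1 1
    simp only [one_mul, mul_one, map_one] at h
    exact (left_eq_add.mp h)
  have hd2 : d (2 : Ω) = 0 := by
    rw [show (2 : Ω) = 1 + 1 by norm_num, map_add, hd1, add_zero]
  have hd4 : d (4 : Ω) = 0 := by
    rw [show (4 : Ω) = 2 + 2 by norm_num, map_add, hd2, add_zero]
  have hρ1 : ∀ x : Ω, x * ρ = ρ * x := fun x => (hρc x).symm
  have hρ2 : ∀ x y : Ω, x * (ρ * y) = ρ * (x * y) := by
    intro x y; rw [← mul_assoc, hρ1, mul_assoc]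
  have hdta' : ∀ x : Ω, dt * (a * x) = -(a * (dt * x)) := by
    intro x; rw [← mul_assoc, hdta, neg_mul, mul_assoc]
  have hdtb' : ∀ x : Ω, dt * (b * x) = -(b * (dt * x)) := by
    intro x; rw [← mul_assoc, hdtb, neg_mul, mul_assoc]
  have hdtc' : ∀ x : Ω, dt * (c * x) = -(c * (dt * x)) := by
    intro x; rw [← mul_assoc, hdtc, neg_mul, mul_assoc]
  have hba' : ∀ x : Ω, b * (a * x) = -(a * (b * x)) := by
    intro x; rw [← mul_assoc, hba, neg_mul, mul_assoc]
  have hca' : ∀ x : Ω, c * (a * x) = -(a * (c * x)) := by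
    intro x; rw [← mul_assoc, hca, neg_mul, mul_assoc]
  have hcb' : ∀ x : Ω, c * (b * x) = -(b * (c * x)) := by
    intro x; rw [← mul_assoc, hcb, neg_mul, mul_assoc]
  have hdt2' : ∀ x : Ω, dt * (dt * x) = 0 := by
    intro x; rw [← mul_assoc, hdt2, zero_mul]
  have ha2' : ∀ x : Ω, a * (a * x) = 0 := by
    intro x; rw [← mul_assoc, ha2, zero_mul]
  have hb2' : ∀ x : Ω, b * (b * x) = 0 := by
    intro x; rw [← mul_assoc, hb2, zero_mul]
  have hc2' : ∀ x : Ω, c * (c * x) = 0 := by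
    intro x; rw [← mul_assoc, hc2, zero_mul]
  have central2 : ∀ x : Ω, x * 2 = 2 * x := fun x => by rw [mul_two, two_mul]
  have central4 : ∀ x : Ω, x * 4 = 4 * x := by
    intro x
    rw [show (4 : Ω) = 2 + 2 by norm_num, mul_add, add_mul, central2]
  have rot : ∀ g n : Ω, g * n = n * g → ∀ y : Ω, g * (n * y) = n * (g * y) := by
    intro g n h y; rw [← mul_assoc, h, mul_assoc]
  have hA2 := rot a 2 (central2 a)
  have hB2 := rot b 2 (central2 b)
  have hC2 := rot c 2 (central2 c)
  have hT2 := rot dt 2 (central2 dt)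
  have hA4 := rot a 4 (central4 a)
  have hB4 := rot b 4 (central4 b)
  have hC4 := rot c 4 (central4 c)
  have hT4 := rot dt 4 (central4 dt)
  have pA2 := central2 a
  have pB2 := central2 b
  have pC2 := central2 c
  have pT2 := central2 dt
  have pA4 := central4 a
  have pB4 := central4 b
  have pC4 := central4 c
  have pT4 := central4 dt
  simp only [map_add, map_neg, map_zero, hL, hddt, hdρ, hda, hdb, hdc, hds1, hds2, hds3, hd2, hd4,
    map_mul, map_ofNat, map_one, hεdt, hεa, hεb, hεc, hερ,
    mul_add, add_mul, mul_neg, neg_mul, neg_neg, mul_zero, zero_mul, add_zero, zero_add,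
    one_mul, mul_one, mul_assoc, sub_eq_add_neg,
    hρ1, hρ2, hs1c, hs2c, hs3c,
    hdta, hdtb, hdtc, hdta', hdtb', hdtc', hba, hca, hcb, hba', hca', hcb',
    hdt2, ha2, hb2, hc2, hdt2', ha2', hb2', hc2',
    hA2, hB2, hC2, hT2, hA4, hB4, hC4, hT4, pA2, pB2, pC2, pT2, pA4, pB4, pC4, pT4]
  noncomm_ring


/-- Abstract exterior-algebra version of the computation in Lemma 1(i): on `ℝ × P`, with
`dαᵢ = σᵢ`, `dσᵢ = 0`, `ρ = e^{2t}` (so `dρ = 2ρ dt`), the forms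
`ωᵢ = 2ρ dt∧αᵢ + 4ρ² αⱼ∧α_k + ρ σᵢ` (for `(i,j,k)` cyclic) satisfy:
each `dωᵢ` is a linear combination `Σⱼ θᵢⱼ ∧ ωⱼ` over one-forms, i.e. lies in the
ideal generated by `ω₁, ω₂, ω₃`. The ring `Ω` plays the role of the algebra of
differential forms, `d` of the exterior derivative, and `ε` of the degree-parity sign
automorphism implementing graded commutativity. -/
theorem stmt_18 (Ω : Type*) [Ring Ω] (d : Ω →+ Ω) (ε : Ω ≃+* Ω)
    (hLeibniz : ∀ a b : Ω, d (a * b) = d a * b + ε a * d b)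
    (dt ρ : Ω) (α σ : Fin 3 → Ω)
    -- exterior derivative relations
    (hddt : d dt = 0) (hdρ : d ρ = 2 * (ρ * dt))
    (hdα : ∀ i, d (α i) = σ i) (hdσ : ∀ i, d (σ i) = 0)
    -- parity signs: `dt` and the `αᵢ` are odd, `ρ` and the `σᵢ` are even
    (hεdt : ε dt = -dt) (hεα : ∀ i, ε (α i) = -α i)
    (hερ : ε ρ = ρ) (hεσ : ∀ i, ε (σ i) = σ i)
    -- graded commutativity relations
    (hρc : ∀ a : Ω, ρ * a = a * ρ) (hσc : ∀ i, ∀ a : Ω, σ i * a = a * σ i)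
    (hdtα : ∀ i, dt * α i = -(α i * dt)) (hαα : ∀ i j, α i * α j = -(α j * α i))
    (hdt2 : dt * dt = 0) (hα2 : ∀ i, α i * α i = 0)
    -- the fundamental two-forms
    (ω : Fin 3 → Ω)
    (hω : ∀ i : Fin 3, ω i =
      2 * (ρ * (dt * α i)) + 4 * (ρ * ρ * (α (i + 1) * α (i + 2))) + ρ * σ i) :
    ∃ θ : Fin 3 → Fin 3 → Ω, ∀ i : Fin 3, d (ω i) = ∑ j : Fin 3, θ i j * ω j := by
  have key : ∀ p q r : Fin 3, q = p + 1 → r = p + 2 →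
      d (ω p) = 4 * (ρ * α r) * ω q - 4 * (ρ * α q) * ω r := by
    intro p q r hq hr
    subst hq; subst hr
    have e1 : p + 1 + 1 = p + 2 := by rw [add_assoc, show (1 : Fin 3) + 1 = 2 by decide]
    have e2 : p + 1 + 2 = p := by
      rw [add_assoc, show (1 : Fin 3) + 2 = 0 by decide, add_zero]
    have e3 : p + 2 + 1 = p := by
      rw [add_assoc, show (2 : Fin 3) + 1 = 0 by decide, add_zero]
    have e4 : p + 2 + 2 = p + 1 := by
      rw [add_assoc, show (2 : Fin 3) + 2 = 1 by decide]
    have hωq := hω (p + 1)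
    rw [e1, e2] at hωq
    have hωr := hω (p + 2)
    rw [e3, e4] at hωr
    rw [hω p, hωq, hωr]
    exact key18 Ω d ε hLeibniz dt ρ (α p) (α (p + 1)) (α (p + 2))
      (σ p) (σ (p + 1)) (σ (p + 2)) hddt hdρ (hdα _) (hdα _) (hdα _)
      (hdσ _) (hdσ _) (hdσ _) hεdt (hεα _) (hεα _) (hεα _) hερ hρc
      (hσc _) (hσc _) (hσc _) (hdtα _) (hdtα _) (hdtα _)
      (hαα _ _) (hαα _ _) (hαα _ _) hdt2 (hα2 _) (hα2 _) (hα2 _)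
  refine ⟨fun i j => if j = i + 1 then 4 * (ρ * α (i + 2))
      else if j = i + 2 then -(4 * (ρ * α (i + 1))) else 0, ?_⟩
  intro i
  fin_cases i
  · simp [Fin.sum_univ_three, key 0 1 2 rfl rfl, sub_eq_add_neg]; try noncomm_ring
  · simp [Fin.sum_univ_three, key 1 2 0 rfl rfl, sub_eq_add_neg]; try noncomm_ring
  · simp [Fin.sum_univ_three, key 2 0 1 rfl rfl, sub_eq_add_neg]; try noncomm_ring
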